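/- Set s₋ = (8 + 3√2 − √(82 − 16√2))/16 and s₊ = (8 − 3√2 + √(82 + 16√2))/16. Then 0 < s₋ < s₊ < 1, and for every real s with 0 ≤ s ≤ 1 one has 32s⁴ − 64s³ + 23s² + 12s − 4 = 0 if and only if s = s₋ or s = s₊ (i.e., s₋ and s₊ are exactly the roots of this quartic in [0,1]). -/
import Mathlib


/-- The parameter value `s₋ = (8 + 3√2 − √(82 − 16√2))/16`. -/
noncomputable def sMinus : ℝ := (8 + 3 * Real.sqrt 2 - Real.sqrt (82 - 16 * Real.sqrt 2)) / 16

/-- The parameter value `s₊ = (8 − 3√2 + √(82 + 16√2))/16`. -/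
noncomputable def sPlus : ℝ := (8 - 3 * Real.sqrt 2 + Real.sqrt (82 + 16 * Real.sqrt 2)) / 16

/-- `0 < s₋ < s₊ < 1`, and `s₋, s₊` are exactly the roots of
`32s⁴ − 64s³ + 23s² + 12s − 4` in `[0,1]`. -/
theorem sMinus_sPlus_roots :
    0 < sMinus ∧ sMinus < sPlus ∧ sPlus < 1 ∧
      ∀ s : ℝ, 0 ≤ s → s ≤ 1 →
        (32 * s ^ 4 - 64 * s ^ 3 + 23 * s ^ 2 + 12 * s - 4 = 0 ↔ s = sMinus ∨ s = sPlus) := by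
  set a : ℝ := Real.sqrt 2 with hadef
  have ha : a ^ 2 = 2 := Real.sq_sqrt (by norm_num)
  have ha0 : 0 ≤ a := Real.sqrt_nonneg 2
  have ha1 : 1.414 < a := by nlinarith
  have ha2 : a < 1.415 := by nlinarith
  set b : ℝ := Real.sqrt (82 - 16 * a) with hbdef
  have hb : b ^ 2 = 82 - 16 * a := Real.sq_sqrt (by nlinarith)
  have hb0 : 0 ≤ b := Real.sqrt_nonneg _
  have hb1 : 7.7 < b := by nlinarith
  have hb2 : b < 7.71 := by nlinarith
  set c : ℝ := Real.sqrt (82 + 16 * a) with hcdef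
  have hc : c ^ 2 = 82 + 16 * a := Real.sq_sqrt (by nlinarith)
  have hc0 : 0 ≤ c := Real.sqrt_nonneg _
  have hc1 : 10.2 < c := by nlinarith
  have hc2 : c < 10.3 := by nlinarith
  have hsm : sMinus = (8 + 3 * a - b) / 16 := rfl
  have hsp : sPlus = (8 - 3 * a + c) / 16 := rfl
  refine ⟨by rw [hsm]; linarith, by rw [hsm, hsp]; linarith, by rw [hsp]; linarith, ?_⟩
  intro s hs0 hs1
  have hQ : 32 * s ^ 4 - 64 * s ^ 3 + 23 * s ^ 2 + 12 * s - 4 =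
      32 * ((s - (8 + 3 * a - b) / 16) * (s - (8 + 3 * a + b) / 16)) *
        ((s - (8 - 3 * a + c) / 16) * (s - (8 - 3 * a - c) / 16)) := by
    have hA : s ^ 2 - ((8 + 3 * a) / 8) * s + a / 4 =
        (s - (8 + 3 * a - b) / 16) * (s - (8 + 3 * a + b) / 16) := by
      linear_combination (1 / 256 : ℝ) * hb - (9 / 256 : ℝ) * ha
    have hB : s ^ 2 - ((8 - 3 * a) / 8) * s - a / 4 =
        (s - (8 - 3 * a + c) / 16) * (s - (8 - 3 * a - c) / 16) := by
      linear_combination (1 / 256 : ℝ) * hc - (9 / 256 : ℝ) * ha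
    rw [← hA, ← hB]
    linear_combination ((9 / 2 : ℝ) * s ^ 2 - 6 * s + 2) * ha
  constructor
  · intro h
    rw [hQ] at h
    rcases mul_eq_zero.1 h with h | h
    · rcases mul_eq_zero.1 h with h | h
      · norm_num at h
      · rcases mul_eq_zero.1 h with h | h
        · left; rw [hsm]; linarith [sub_eq_zero.1 h]
        · exfalso
          have := sub_eq_zero.1 h
          rw [this] at hs1
          nlinarith
    · rcases mul_eq_zero.1 h with h | h
      · right; rw [hsp]; linarith [sub_eq_zero.1 h]
      · exfalso
        have := sub_eq_zero.1 h
        rw [this] at hs0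
        nlinarith
  · rintro (rfl | rfl)
    · rw [hQ, hsm]; ring
    · rw [hQ, hsp]; ring
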